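/- arXiv:1102.2942 — 2 statements merged into one kernel-verified Lean document; each statement's English description precedes it below -/
import Mathlib

section
/- Let r > 0 and h ∈ (0, π/2), and let (ρ_k)_{k∈ℤ} be a real sequence with Σ_k ρ_k² ≤ r². For each fixed n ∈ ℤ, set a_{k,n} := (ρ_k − ρ_n)/(π(k−n)) for k ≠ n and a_{n,n} := 0. Then |Σ_{k∈ℤ} a_{k,n}| ≤ r/√3 and Σ_{k∈ℤ} a_{k,n}² ≤ 4π²r²/3 (sums in principal value sense where needed). -/
open Filter Finset Real Topology SummationFilter

/-!
Write `a_{k,n} = π⁻¹ (ρ_k - ρ_n) e_k` with `e_k = (k - n)⁻¹`; Lean's `0⁻¹ = 0` makes `e_n = 0`,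
which matches `a_{n,n} = 0`. The series `Σ ρ_k e_k` converges absolutely, and Cauchy–Schwarz with
`Σ e_k² = π²/3` bounds it by `r π / √3`. The remaining part `ρ_n Σ e_k` has principal value `0`:
`e` is the odd null sequence `k ↦ k⁻¹` shifted by `n`, and shifting a null sequence changes its
symmetric partial sums only by boundary terms tending to `0`. Finally `|e_k| ≤ 1` gives
`a_{k,n}² ≤ π⁻² (2 ρ_k² + 2 ρ_n² e_k²)`, whose sum is at most `2r²/π² + 2r²/3`.
-/

section SymmetricSums

variable {G : Type*} [AddCommGroup G] [TopologicalSpace G] [IsTopologicalAddGroup G]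

lemma hasSum_sub_comp_add_one_symmetricIcc {f : ℤ → G} (hf : Tendsto f cofinite (𝓝 0)) :
    HasSum (fun k => f (k + 1) - f k) 0 (symmetricIcc ℤ) := by
  rw [hasSum_symmetricIcc_iff]
  have hsum (N : ℕ) : ∑ k ∈ Icc (-(N : ℤ)) N, (f (k + 1) - f k) = f (N + 1) - f (-N) := by
    have h := sum_Ico_int_sub N f
    rw [sum_sub_distrib, sub_eq_iff_eq_add] at h
    rw [sum_Icc_eq_sum_Ico_add _ (by omega), sum_sub_distrib, h]
    abel
  have htop : Tendsto (fun N : ℕ => ((N : ℤ) + 1)) atTop cofinite :=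
    Nat.cofinite_eq_atTop ▸ (add_left_injective 1 |>.comp Nat.cast_injective).tendsto_cofinite
  have hbot : Tendsto (fun N : ℕ => -(N : ℤ)) atTop cofinite :=
    Nat.cofinite_eq_atTop ▸ (neg_injective.comp Nat.cast_injective).tendsto_cofinite
  simpa [hsum] using (hf.comp htop).sub (hf.comp hbot)

lemma HasSum.comp_add_symmetricIcc {f : ℤ → G} {a : G} (hf : Tendsto f cofinite (𝓝 0))
    (hs : HasSum f a (symmetricIcc ℤ)) (m : ℤ) :
    HasSum (fun k => f (k + m)) a (symmetricIcc ℤ) := by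
  have hshift (m : ℤ) : Tendsto (fun k => f (k + m)) cofinite (𝓝 0) :=
    hf.comp (add_left_injective m).tendsto_cofinite
  induction m using Int.induction_on with
  | zero => simpa using hs
  | succ i ih =>
    convert (hasSum_sub_comp_add_one_symmetricIcc (hshift i)).add ih using 1
    · simp only [sub_add_cancel, add_right_comm _ (1 : ℤ), add_assoc]
    · rw [_root_.zero_add]
  | pred i ih =>
    convert ih.sub (hasSum_sub_comp_add_one_symmetricIcc (hshift (-i - 1))) using 1
    · funext k
      rw [show k + 1 + (-i - 1) = k + -i by ring, sub_sub_cancel]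
    · rw [sub_zero]

end SymmetricSums

lemma Function.Odd.hasSum_symmetricIcc {G : Type*} [AddCommGroup G] [IsAddTorsionFree G]
    [TopologicalSpace G] {f : ℤ → G} (hf : f.Odd) : HasSum f 0 (symmetricIcc ℤ) := by
  rw [hasSum_symmetricIcc_iff]
  refine tendsto_const_nhds.congr fun N => (hf.finsetSum_eq_zero ?_).symm
  ext k
  simp only [mem_map_equiv, Equiv.neg_symm, Equiv.neg_apply, mem_Icc, neg_le_neg_iff]
  omega

lemma tendsto_inv_intCast_cofinite : Tendsto (fun k : ℤ => (k : ℝ)⁻¹) cofinite (𝓝 0) :=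
  Int.cofinite_eq ▸ tendsto_inv₀_cobounded.comp tendsto_intCast_atBot_sup_atTop_cobounded

lemma hasSum_inv_intCast_sub_symmetricIcc (n : ℤ) :
    HasSum (fun k : ℤ => ((k : ℝ) - n)⁻¹) 0 (symmetricIcc ℤ) := by
  have hodd : Function.Odd fun k : ℤ => (k : ℝ)⁻¹ := fun k => by simp [inv_neg]
  simpa [sub_eq_add_neg] using hodd.hasSum_symmetricIcc.comp_add_symmetricIcc
    tendsto_inv_intCast_cofinite (-n)

lemma hasSum_sub_mul_inv_intCast_sub_symmetricIcc {u : ℤ → ℝ} {n : ℤ}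
    (hu : Summable fun k => u k * ((k : ℝ) - n)⁻¹) (c : ℝ) :
    HasSum (fun k => (u k - c) * ((k : ℝ) - n)⁻¹) (∑' k, u k * ((k : ℝ) - n)⁻¹)
      (symmetricIcc ℤ) := by
  have hu' : HasSum (fun k => u k * ((k : ℝ) - n)⁻¹) (∑' k, u k * ((k : ℝ) - n)⁻¹)
      (symmetricIcc ℤ) :=
    hu.hasSum.mono_left le_atTop
  simpa [sub_mul] using hu'.sub ((hasSum_inv_intCast_sub_symmetricIcc n).mul_left c)

lemma hasSum_inv_intCast_sq : HasSum (fun k : ℤ => (k : ℝ)⁻¹ ^ 2) (π ^ 2 / 3) := by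
  have h : HasSum (fun k : ℕ => (k : ℝ)⁻¹ ^ 2) (π ^ 2 / 6) := by
    simpa using hasSum_zeta_two
  have h' : HasSum (fun k : ℕ => ((k : ℝ) + 1)⁻¹ ^ 2) (π ^ 2 / 6) := by
    simpa using (hasSum_nat_add_iff' 1).mpr h
  convert HasSum.of_nat_of_neg_add_one (f := fun k : ℤ => (k : ℝ)⁻¹ ^ 2) (by simpa using h)
    (by convert h' using 2 with k; push_cast; rw [inv_neg, neg_sq]) using 1
  ring

lemma hasSum_inv_intCast_sub_sq (n : ℤ) :
    HasSum (fun k : ℤ => ((k : ℝ) - n)⁻¹ ^ 2) (π ^ 2 / 3) := by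
  convert (Equiv.subRight n).hasSum_iff.mpr hasSum_inv_intCast_sq using 2 with k
  simp

lemma abs_inv_intCast_le_one (k : ℤ) : |(k : ℝ)⁻¹| ≤ 1 := by
  rcases eq_or_ne k 0 with rfl | hk
  · simp
  · rw [abs_inv]
    exact inv_le_one_of_one_le₀ (by exact_mod_cast Int.one_le_abs hk)

lemma summable_mul_and_abs_tsum_mul_le {ι : Type*} {u v : ι → ℝ}
    (hu : Summable fun i => u i ^ 2) (hv : Summable fun i => v i ^ 2) :
    Summable (fun i => u i * v i) ∧
      |∑' i, u i * v i| ≤ √(∑' i, u i ^ 2) * √(∑' i, v i ^ 2) := by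
  have hsq (w : ι → ℝ) : (fun i => |w i| ^ (2 : ℝ)) = fun i => w i ^ 2 := by
    simp [sq_abs]
  obtain ⟨habs, hle⟩ := Real.summable_and_inner_le_Lp_mul_Lq_tsum_of_nonneg (p := 2) (q := 2)
    .two_two (fun i => abs_nonneg (u i)) (fun i => abs_nonneg (v i)) (by rw [hsq]; exact hu)
    (by rw [hsq]; exact hv)
  rw [hsq, hsq, ← Real.sqrt_eq_rpow, ← Real.sqrt_eq_rpow] at hle
  simp only [← abs_mul] at habs hle
  refine ⟨habs.of_abs, ?_⟩
  have h := norm_tsum_le_tsum_norm (f := fun i => u i * v i) (by simpa only [Real.norm_eq_abs])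
  simp only [Real.norm_eq_abs] at h
  exact h.trans hle

lemma summable_and_tsum_sq_sub_mul_le {ι : Type*} {u e : ι → ℝ} (c : ℝ)
    (hu : Summable fun i => u i ^ 2) (he : Summable fun i => e i ^ 2) (he1 : ∀ i, |e i| ≤ 1) :
    Summable (fun i => ((u i - c) * e i) ^ 2) ∧
      ∑' i, ((u i - c) * e i) ^ 2 ≤ 2 * ∑' i, u i ^ 2 + 2 * c ^ 2 * ∑' i, e i ^ 2 := by
  have hbound (i : ι) : ((u i - c) * e i) ^ 2 ≤ 2 * u i ^ 2 + 2 * c ^ 2 * e i ^ 2 := by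
    have he2 : e i ^ 2 ≤ 1 := (sq_le_one_iff_abs_le_one _).mpr (he1 i)
    nlinarith [mul_nonneg (sq_nonneg (u i)) (sub_nonneg.mpr he2),
      mul_nonneg (sq_nonneg (u i + c)) (sq_nonneg (e i))]
  have hmaj : Summable fun i => 2 * u i ^ 2 + 2 * c ^ 2 * e i ^ 2 :=
    (hu.mul_left 2).add (he.mul_left _)
  have hsq : Summable fun i => ((u i - c) * e i) ^ 2 :=
    hmaj.of_nonneg_of_le (fun i => sq_nonneg _) hbound
  refine ⟨hsq, (hsq.tsum_le_tsum hbound hmaj).trans_eq ?_⟩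
  rw [(hu.mul_left 2).tsum_add (he.mul_left _), tsum_mul_left, tsum_mul_left]

theorem akn_estimates_general (r : ℝ) (hr : 0 < r)
    (ρ : ℤ → ℝ) (hsum : Summable fun k => (ρ k) ^ 2)
    (hρ : (∑' k : ℤ, (ρ k) ^ 2) ≤ r ^ 2) (n : ℤ) :
    (∃ S : ℝ,
        Tendsto (fun N : ℕ => ∑ k ∈ Finset.Icc (-(N : ℤ)) N,
            (if k = n then 0 else (ρ k - ρ n) / (Real.pi * (k - n)))) atTop (nhds S) ∧
        |S| ≤ r / Real.sqrt 3) ∧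
    (Summable fun k : ℤ =>
        (if k = n then 0 else (ρ k - ρ n) / (Real.pi * (k - n))) ^ 2) ∧
    (∑' k : ℤ, (if k = n then 0 else (ρ k - ρ n) / (Real.pi * (k - n))) ^ 2) ≤
      4 * Real.pi ^ 2 * r ^ 2 / 3 := by
  set e : ℤ → ℝ := fun k => ((k : ℝ) - n)⁻¹
  have ha (k : ℤ) : (if k = n then 0 else (ρ k - ρ n) / (π * (k - n))) =
      π⁻¹ * ((ρ k - ρ n) * e k) := by
    split_ifs with hk
    · simp [hk]
    · rw [div_eq_mul_inv, mul_inv]; ring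
  simp_rw [ha]
  have he := hasSum_inv_intCast_sub_sq n
  obtain ⟨hρe, hCS⟩ := summable_mul_and_abs_tsum_mul_le hsum he.summable
  obtain ⟨hsq, hsq_le⟩ := summable_and_tsum_sq_sub_mul_le (ρ n) hsum he.summable
    fun k => by simpa using abs_inv_intCast_le_one (k - n)
  have hρn : ρ n ^ 2 ≤ r ^ 2 := (hsum.le_tsum n fun _ _ => sq_nonneg _).trans hρ
  refine ⟨⟨π⁻¹ * ∑' k, ρ k * e k, ?_, ?_⟩, ?_, ?_⟩
  · rw [← hasSum_symmetricIcc_iff]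
    exact (hasSum_sub_mul_inv_intCast_sub_symmetricIcc hρe (ρ n)).mul_left π⁻¹
  · rw [he.tsum_eq] at hCS
    calc |π⁻¹ * ∑' k, ρ k * e k| = π⁻¹ * |∑' k, ρ k * e k| := by
          rw [abs_mul, abs_inv, abs_of_pos pi_pos]
      _ ≤ π⁻¹ * (√(r ^ 2) * √(π ^ 2 / 3)) := by gcongr; exact hCS.trans (by gcongr)
      _ = r / √3 := by
          rw [Real.sqrt_sq hr.le, Real.sqrt_div' _ (by norm_num), Real.sqrt_sq pi_pos.le]
          field_simp
  · simpa only [mul_pow] using hsq.mul_left (π⁻¹ ^ 2)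
  · rw [he.tsum_eq] at hsq_le
    simp_rw [mul_pow π⁻¹]
    rw [tsum_mul_left, inv_pow, inv_mul_le_iff₀ (by positivity)]
    have hπ : 3 ≤ π ^ 2 := by nlinarith [pi_gt_three]
    nlinarith [mul_le_mul_of_nonneg_left hπ (sq_nonneg r)]

/-- let `r > 0`, `h ∈ (0, π/2)`, and let `(ρ_k)_{k∈ℤ}` be real with
`Σ ρ_k² ≤ r²`.  With `a_{k,n} = (ρ_k − ρ_n)/(π(k−n))` for `k ≠ n`, `a_{n,n} = 0`,
the principal-value sum `Σ_k a_{k,n}` converges with modulus at most `r/√3`, and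
`Σ_k a_{k,n}² ≤ 4π²r²/3`. -/
theorem akn_estimates (r h : ℝ) (hr : 0 < r) (hh : 0 < h) (hh' : h < Real.pi / 2)
    (ρ : ℤ → ℝ) (hsum : Summable fun k => (ρ k) ^ 2)
    (hρ : (∑' k : ℤ, (ρ k) ^ 2) ≤ r ^ 2) (n : ℤ) :
    (∃ S : ℝ,
        Tendsto (fun N : ℕ => ∑ k ∈ Finset.Icc (-(N : ℤ)) N,
            (if k = n then 0 else (ρ k - ρ n) / (Real.pi * (k - n)))) atTop (nhds S) ∧
        |S| ≤ r / Real.sqrt 3) ∧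
    (Summable fun k : ℤ =>
        (if k = n then 0 else (ρ k - ρ n) / (Real.pi * (k - n))) ^ 2) ∧
    (∑' k : ℤ, (if k = n then 0 else (ρ k - ρ n) / (Real.pi * (k - n))) ^ 2) ≤
      4 * Real.pi ^ 2 * r ^ 2 / 3 :=
  akn_estimates_general r hr ρ hsum hρ n
end

section
/- Let h > 0 and let (λ_n)_{n∈ℤ} be a strictly increasing real sequence with λ_{n+1} − λ_n ≥ 2h for all n, λ_n = πn + ρ_n with Σ ρ_n² ≤ r². Then for every n ∈ ℤ, the principal-value product Π_{k≠n} (λ_k − λ_n)/(π(k−n)) converges to a positive number P_n, and there exist constants 0 < K₁ ≤ K₂ < ∞, depending only on h and r (not on n or on the particular sequence), such that K₁ ≤ P_n ≤ K₂. -/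
/-!
Write the `k`-th factor as `1 + a_k` with `a_k = (ρ_k - ρ_n) / (π (k - n))`. Separation gives
`1 + a_k ≥ 2h/π`, so `log (1 + a_k) - a_k = O(a_k²)`, and `∑ a_k² ≲ ∑ ρ_k² + ρ_n² ∑ (k - n)⁻²`.
The linear part splits into `∑ ρ_k / (π (k - n))`, absolutely convergent by AM-GM, and
`ρ_n / π` times the symmetric sum `∑_{|k| ≤ N} (k - n)⁻¹`, which tends to `0` because shifting the
window by one changes it only by two boundary terms. So the logarithms of the partial products
converge to some `T` with `|T|` bounded in terms of `h` and `r`, and `P_n = exp T`.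
-/

open Filter Finset Real Topology

lemma abs_log_one_add_sub_le {δ a : ℝ} (hδ : 0 < δ) (ha : δ ≤ 1 + a) :
    |log (1 + a) - a| ≤ a ^ 2 / δ := by
  have hpos : 0 < 1 + a := hδ.trans_le ha
  have upper : log (1 + a) ≤ a := by linarith [log_le_sub_one_of_pos hpos]
  have lower : a - a ^ 2 / (1 + a) ≤ log (1 + a) := by
    have hinv := one_sub_inv_le_log_of_pos hpos
    have e : a - a ^ 2 / (1 + a) = 1 - (1 + a)⁻¹ := by field_simp; ring
    linarith
  have : a ^ 2 / (1 + a) ≤ a ^ 2 / δ := div_le_div_of_nonneg_left (sq_nonneg a) hδ ha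
  rw [abs_sub_comm, abs_of_nonneg (by linarith)]
  linarith

lemma abs_log_one_add_sub_mul_div_add_le {c δ x y t : ℝ} (hc : 0 < c) (hδ : 0 < δ)
    (ht : |t| ≤ 1) (hsep : δ ≤ 1 + (x - y) * t / c) :
    |log (1 + (x - y) * t / c) + y * t / c|
      ≤ 2 / (c ^ 2 * δ) * (x ^ 2 + y ^ 2 * t ^ 2) + (x ^ 2 + t ^ 2) / (2 * c) := by
  set a := (x - y) * t / c
  have ht2 : t ^ 2 ≤ 1 := by nlinarith [sq_abs t, abs_nonneg t]
  have quad : a ^ 2 / δ ≤ 2 / (c ^ 2 * δ) * (x ^ 2 + y ^ 2 * t ^ 2) := by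
    have : (x - y) ^ 2 * t ^ 2 ≤ 2 * (x ^ 2 + y ^ 2 * t ^ 2) := by
      nlinarith [mul_nonneg (sq_nonneg (x + y)) (sq_nonneg t),
        mul_nonneg (sq_nonneg x) (sub_nonneg.2 ht2)]
    calc a ^ 2 / δ = (x - y) ^ 2 * t ^ 2 / (c ^ 2 * δ) := by simp only [a]; ring
      _ ≤ 2 * (x ^ 2 + y ^ 2 * t ^ 2) / (c ^ 2 * δ) := by gcongr
      _ = _ := by ring
  have lin : |x * t / c| ≤ (x ^ 2 + t ^ 2) / (2 * c) := by
    rw [abs_div, abs_mul, abs_of_pos hc, div_le_div_iff₀ hc (by positivity)]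
    nlinarith [sq_nonneg (|x| - |t|), sq_abs x, sq_abs t]
  calc |log (1 + a) + y * t / c| = |(log (1 + a) - a) + x * t / c| := by
        congr 1; simp only [a]; ring
    _ ≤ |log (1 + a) - a| + |x * t / c| := abs_add_le _ _
    _ ≤ _ := add_le_add ((abs_log_one_add_sub_le hδ hsep).trans quad) lin

section Separated

variable {f : ℤ → ℝ} {c : ℝ}

lemma mul_sub_le_sub_of_forall_add_le (hf : ∀ n, f n + c ≤ f (n + 1)) {m k : ℤ} (hmk : m ≤ k) :
    c * (k - m) ≤ f k - f m := by
  induction k, hmk using Int.leInduction with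
  | base => simp
  | succ k _ ih => push_cast; linarith [hf k]

lemma le_sub_div_sub_of_forall_add_le (hf : ∀ n, f n + c ≤ f (n + 1)) {m k : ℤ} (hmk : m ≠ k) :
    c ≤ (f k - f m) / (k - m) := by
  wlog hlt : m < k generalizing m k
  · rw [← neg_div_neg_eq, neg_sub, neg_sub]
    exact this hmk.symm (hmk.symm.lt_of_le (not_lt.1 hlt))
  have hpos : (0 : ℝ) < k - m := sub_pos.2 (Int.cast_lt.2 hlt)
  rw [le_div_iff₀ hpos]
  exact mul_sub_le_sub_of_forall_add_le hf hlt.le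

end Separated

lemma Finset.sum_Icc_sub_one_sub {M : Type*} [AddCommGroup M] (u : ℤ → M) {a b : ℤ}
    (hab : a - 1 ≤ b) : ∑ i ∈ Icc a b, (u (i - 1) - u i) = u (a - 1) - u b := by
  induction b, hab using Int.leInduction with
  | base => simp
  | succ b hb ih =>
    rw [← sum_Ico_add_eq_sum_Icc (by omega), Ico_add_one_right_eq_Icc, ih, add_sub_cancel_right]
    abel

lemma tendsto_sum_Icc_comp_sub_sub_sum_Icc {g : ℤ → ℝ} (hbot : Tendsto g atBot (𝓝 0))
    (htop : Tendsto g atTop (𝓝 0)) (n : ℤ) :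
    Tendsto (fun N : ℕ => ∑ k ∈ Icc (-(N : ℤ)) N, g (k - n) - ∑ k ∈ Icc (-(N : ℤ)) N, g k)
      atTop (𝓝 0) := by
  have step (m : ℤ) : Tendsto (fun N : ℕ =>
      ∑ k ∈ Icc (-(N : ℤ)) N, g (k - (m + 1)) - ∑ k ∈ Icc (-(N : ℤ)) N, g (k - m))
      atTop (𝓝 0) := by
    have hbdry (N : ℕ) : ∑ k ∈ Icc (-(N : ℤ)) N, g (k - (m + 1)) - ∑ k ∈ Icc (-(N : ℤ)) N, g (k - m)
        = g (-N - 1 - m) - g (N - m) := by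
      rw [← sum_sub_distrib]
      convert Finset.sum_Icc_sub_one_sub (fun k => g (k - m)) (a := -N) (b := N) (by omega)
        using 4
      ring
    have hlow : Tendsto (fun N : ℕ => -(N : ℤ) - 1 - m) atTop atBot :=
      tendsto_atBot.2 fun b => (eventually_ge_atTop (-b - 1 - m).toNat).mono fun N hN => by omega
    have hhigh : Tendsto (fun N : ℕ => (N : ℤ) - m) atTop atTop :=
      tendsto_atTop.2 fun b => (eventually_ge_atTop (b + m).toNat).mono fun N hN => by omega
    simpa only [hbdry, sub_zero, Function.comp_def] using (hbot.comp hlow).sub (htop.comp hhigh)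
  induction n using Int.induction_on with
  | zero => simp
  | succ i ih => simpa using ih.add (step i)
  | pred i ih =>
    have := ih.sub (step (-i - 1))
    simp only [sub_add_cancel, sub_zero] at this
    exact this.congr fun N => by ring

lemma sum_Icc_neg_self_inv (N : ℤ) : ∑ k ∈ Icc (-N) N, (k : ℝ)⁻¹ = 0 := by
  have hodd : ∑ k ∈ Icc (-N) N, (k : ℝ)⁻¹ = ∑ k ∈ Icc (-N) N, -(k : ℝ)⁻¹ :=
    sum_nbij' Neg.neg Neg.neg (by simp; omega) (by simp; omega) (by simp) (by simp)
      (by simp [inv_neg])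
  rw [sum_neg_distrib] at hodd
  linarith

lemma tendsto_sum_Icc_inv_sub (n : ℤ) :
    Tendsto (fun N : ℕ => ∑ k ∈ Icc (-(N : ℤ)) N, ((k : ℝ) - n)⁻¹) atTop (𝓝 0) := by
  have := tendsto_sum_Icc_comp_sub_sub_sum_Icc (g := fun j : ℤ => (j : ℝ)⁻¹)
    (tendsto_inv_atBot_zero.comp (tendsto_intCast_atBot_iff.2 tendsto_id))
    (tendsto_inv_atTop_zero.comp (tendsto_intCast_atTop_iff.2 tendsto_id)) n
  simpa only [sum_Icc_neg_self_inv, sub_zero, Int.cast_sub] using this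

lemma summable_inv_sub_sq (n : ℤ) : Summable fun k : ℤ => ((k : ℝ) - n)⁻¹ ^ 2 := by
  have hS : Summable fun j : ℤ => (j : ℝ)⁻¹ ^ 2 := by
    simpa only [one_div, inv_pow] using Real.summable_one_div_int_pow.2 one_lt_two
  simpa [Function.comp_def] using (Equiv.subRight n).summable_iff.2 hS

lemma tsum_inv_sub_sq (n : ℤ) : ∑' k : ℤ, ((k : ℝ) - n)⁻¹ ^ 2 = ∑' k : ℤ, (k : ℝ)⁻¹ ^ 2 := by
  simpa only [Equiv.subRight_apply, Int.cast_sub] using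
    (Equiv.subRight n).tsum_eq fun j : ℤ => (j : ℝ)⁻¹ ^ 2

noncomputable def pvFactor (lam : ℤ → ℝ) (n k : ℤ) : ℝ := (lam k - lam n) / (π * (k - n))

noncomputable def pvLogBound (h r : ℝ) : ℝ :=
  (r ^ 2 + r ^ 2 * ∑' k : ℤ, (k : ℝ)⁻¹ ^ 2) / (π * h) + (r ^ 2 + ∑' k : ℤ, (k : ℝ)⁻¹ ^ 2) / (2 * π)

lemma pvLogBound_nonneg {h : ℝ} (hh : 0 < h) (r : ℝ) : 0 ≤ pvLogBound h r := by
  have : 0 ≤ ∑' k : ℤ, (k : ℝ)⁻¹ ^ 2 := tsum_nonneg fun _ => sq_nonneg _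
  unfold pvLogBound
  positivity

section PrincipalValue

variable {lam : ℤ → ℝ} {h : ℝ}

lemma pvFactor_eq {n k : ℤ} (hkn : k ≠ n) :
    pvFactor lam n k = 1 + ((lam k - π * k) - (lam n - π * n)) * ((k : ℝ) - n)⁻¹ / π := by
  have : (k : ℝ) - n ≠ 0 := sub_ne_zero.2 (Int.cast_injective.ne hkn)
  unfold pvFactor
  field_simp
  ring

lemma two_mul_div_pi_le_pvFactor (hstep : ∀ n, lam n + 2 * h ≤ lam (n + 1)) {n k : ℤ}
    (hkn : k ≠ n) : 2 * h / π ≤ pvFactor lam n k := by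
  rw [pvFactor, div_mul_eq_div_div_swap]
  exact div_le_div_of_nonneg_right (le_sub_div_sub_of_forall_add_le hstep hkn.symm) pi_pos.le

lemma pvFactor_pos (hh : 0 < h) (hstep : ∀ n, lam n + 2 * h ≤ lam (n + 1)) {n k : ℤ}
    (hkn : k ≠ n) : 0 < pvFactor lam n k :=
  (by positivity : (0 : ℝ) < 2 * h / π).trans_le (two_mul_div_pi_le_pvFactor hstep hkn)

lemma abs_log_pvFactor_add_le (hh : 0 < h) (hstep : ∀ n, lam n + 2 * h ≤ lam (n + 1)) (n k : ℤ) :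
    |log (pvFactor lam n k) + (lam n - π * n) * ((k : ℝ) - n)⁻¹ / π|
      ≤ ((lam k - π * k) ^ 2 + (lam n - π * n) ^ 2 * ((k : ℝ) - n)⁻¹ ^ 2) / (π * h)
        + ((lam k - π * k) ^ 2 + ((k : ℝ) - n)⁻¹ ^ 2) / (2 * π) := by
  rcases eq_or_ne k n with rfl | hkn
  · simp only [sub_self, inv_zero, mul_zero, zero_div, pvFactor, div_zero, log_zero, add_zero,
      abs_zero]
    positivity
  have ht : |((k : ℝ) - n)⁻¹| ≤ 1 := by
    have : (1 : ℝ) ≤ |(k : ℝ) - n| := by exact_mod_cast Int.one_le_abs (sub_ne_zero.2 hkn)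
    rw [abs_inv]
    exact inv_le_one_of_one_le₀ this
  have hsep := two_mul_div_pi_le_pvFactor hstep hkn
  rw [pvFactor_eq hkn] at hsep ⊢
  have hδ : 2 / (π ^ 2 * (2 * h / π)) = 1 / (π * h) := by field_simp
  have := abs_log_one_add_sub_mul_div_add_le pi_pos (by positivity) ht hsep
  rwa [hδ, one_div_mul_eq_div] at this

lemma log_prod_erase_pvFactor (hh : 0 < h) (hstep : ∀ n, lam n + 2 * h ≤ lam (n + 1)) (n : ℤ)
    (s : Finset ℤ) :
    log (∏ k ∈ s.erase n, pvFactor lam n k)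
      = ∑ k ∈ s, (log (pvFactor lam n k) + (lam n - π * n) * ((k : ℝ) - n)⁻¹ / π)
        - (lam n - π * n) / π * ∑ k ∈ s, ((k : ℝ) - n)⁻¹ := by
  -- the summand `k = n` vanishes: `pvFactor lam n n = 0 / 0 = 0` and `log 0 = 0`
  rw [log_prod fun k hk => (pvFactor_pos hh hstep (ne_of_mem_erase hk)).ne',
    sum_erase _ (by simp [pvFactor]), mul_sum, ← sum_sub_distrib]
  exact sum_congr rfl fun k _ => by ring

lemma exists_tendsto_log_prod_erase_pvFactor {r : ℝ} (hh : 0 < h)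
    (hstep : ∀ n, lam n + 2 * h ≤ lam (n + 1)) (hsum : Summable fun k : ℤ => (lam k - π * k) ^ 2)
    (hle : ∑' k : ℤ, (lam k - π * k) ^ 2 ≤ r ^ 2) (n : ℤ) :
    ∃ T, Tendsto (fun N : ℕ => log (∏ k ∈ (Icc (-(N : ℤ)) N).erase n, pvFactor lam n k))
      atTop (𝓝 T) ∧ |T| ≤ pvLogBound h r := by
  set ρ : ℤ → ℝ := fun k => lam k - π * k
  set t : ℤ → ℝ := fun k => ((k : ℝ) - n)⁻¹
  set S := ∑' k : ℤ, (k : ℝ)⁻¹ ^ 2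
  have ht : HasSum (fun k => t k ^ 2) S := by
    simpa only [t, S, tsum_inv_sub_sq] using (summable_inv_sub_sq n).hasSum
  have hM : HasSum
      (fun k => (ρ k ^ 2 + ρ n ^ 2 * t k ^ 2) / (π * h) + (ρ k ^ 2 + t k ^ 2) / (2 * π))
      ((∑' k, ρ k ^ 2 + ρ n ^ 2 * S) / (π * h) + (∑' k, ρ k ^ 2 + S) / (2 * π)) :=
    ((hsum.hasSum.add (ht.mul_left _)).div_const _).add ((hsum.hasSum.add ht).div_const _)
  have hG (k : ℤ) : ‖log (pvFactor lam n k) + ρ n * t k / π‖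
      ≤ (ρ k ^ 2 + ρ n ^ 2 * t k ^ 2) / (π * h) + (ρ k ^ 2 + t k ^ 2) / (2 * π) :=
    abs_log_pvFactor_add_le hh hstep n k
  refine ⟨∑' k, (log (pvFactor lam n k) + ρ n * t k / π), ?_, ?_⟩
  · have hpart := (Summable.of_norm_bounded hM.summable hG).hasSum.comp Finset.tendsto_Icc_neg
    have := hpart.sub ((tendsto_sum_Icc_inv_sub n).const_mul (ρ n / π))
    rw [mul_zero, sub_zero] at this
    exact this.congr fun N => (log_prod_erase_pvFactor hh hstep n _).symm
  · have hρn : ρ n ^ 2 ≤ r ^ 2 := (hsum.le_tsum n fun _ _ => sq_nonneg _).trans hle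
    have hS : 0 ≤ S := tsum_nonneg fun _ => sq_nonneg _
    calc _ = ‖_‖ := (norm_eq_abs _).symm
      _ ≤ _ := tsum_of_norm_bounded hM hG
      _ ≤ pvLogBound h r := by unfold pvLogBound; gcongr

end PrincipalValue

theorem pv_product_uniform_bounds_general (h r : ℝ) (hh : 0 < h) :
    ∃ K₁ K₂ : ℝ, 0 < K₁ ∧ K₁ ≤ K₂ ∧
      ∀ (lam : ℤ → ℝ), StrictMono lam →
        (∀ n : ℤ, lam n + 2 * h ≤ lam (n + 1)) →
        (Summable fun n : ℤ => (lam n - Real.pi * n) ^ 2) →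
        (∑' n : ℤ, (lam n - Real.pi * n) ^ 2) ≤ r ^ 2 →
        ∀ n : ℤ, ∃ P : ℝ,
          Tendsto (fun N : ℕ => ∏ k ∈ (Finset.Icc (-(N : ℤ)) N).erase n,
              (lam k - lam n) / (Real.pi * (k - n))) atTop (nhds P) ∧
          K₁ ≤ P ∧ P ≤ K₂ := by
  refine ⟨exp (-pvLogBound h r), exp (pvLogBound h r), exp_pos _,
    exp_le_exp.2 (by linarith [pvLogBound_nonneg hh r]), ?_⟩
  intro lam _ hstep hsum hle n
  obtain ⟨T, hT, hTC⟩ := exists_tendsto_log_prod_erase_pvFactor hh hstep hsum hle n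
  have hpos (N : ℕ) : 0 < ∏ k ∈ (Icc (-(N : ℤ)) N).erase n, pvFactor lam n k :=
    prod_pos fun k hk => pvFactor_pos hh hstep (ne_of_mem_erase hk)
  refine ⟨exp T, ?_, exp_le_exp.2 (neg_le_of_abs_le hTC), exp_le_exp.2 (le_of_abs_le hTC)⟩
  exact ((continuous_exp.tendsto T).comp hT).congr fun N => exp_log (hpos N)

/-- let `h, r > 0`.  There exist constants `0 < K₁ ≤ K₂ < ∞`
depending only on `h` and `r` such that for every strictly increasing real
sequence `(λ_n)_{n∈ℤ}` with `λ_{n+1} − λ_n ≥ 2h`, `λ_n = πn + ρ_n` and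
`Σ ρ_n² ≤ r²`, and every `n ∈ ℤ`, the principal-value product
`Π_{k≠n} (λ_k − λ_n)/(π(k−n))` converges to a number `P_n ∈ [K₁, K₂]`
(in particular `P_n > 0`). -/
theorem pv_product_uniform_bounds (h r : ℝ) (hh : 0 < h) (hr : 0 < r) :
    ∃ K₁ K₂ : ℝ, 0 < K₁ ∧ K₁ ≤ K₂ ∧
      ∀ (lam : ℤ → ℝ), StrictMono lam →
        (∀ n : ℤ, lam n + 2 * h ≤ lam (n + 1)) →
        (Summable fun n : ℤ => (lam n - Real.pi * n) ^ 2) →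
        (∑' n : ℤ, (lam n - Real.pi * n) ^ 2) ≤ r ^ 2 →
        ∀ n : ℤ, ∃ P : ℝ,
          Tendsto (fun N : ℕ => ∏ k ∈ (Finset.Icc (-(N : ℤ)) N).erase n,
              (lam k - lam n) / (Real.pi * (k - n))) atTop (nhds P) ∧
          K₁ ≤ P ∧ P ≤ K₂ :=
  pv_product_uniform_bounds_general h r hh
end
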